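/- If a probability measure P on ℝ has exponential decay, then its Fourier transform t ↦ ∫_ℝ e^{its} dP(s) is a real-analytic function on ℝ. -/

import Mathlib

/-!
Exponential tails make `e^{a|s|}` integrable for some `a > 0` (layer cake formula), so the
moment generating function is finite near `0` and the complex moment generating function
`z ↦ ∫ e^{zs} dP(s)` is holomorphic on a vertical strip around the imaginary axis. The Fourier
transform is its restriction to that axis, hence real-analytic.
-/

open MeasureTheory

noncomputable section

/-- A probability measure `P` on `ℝ` has exponential decay if there are `c, b > 0` with
`P((-∞,-t) ∪ (t,∞)) < c e^{-bt}` for every `t > 0`. -/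
def HasExpDecay (P : Measure ℝ) : Prop :=
  ∃ c > (0 : ℝ), ∃ b > (0 : ℝ), ∀ t > (0 : ℝ),
    P (Set.Iio (-t) ∪ Set.Ioi t) < ENNReal.ofReal (c * Real.exp (-b * t))

open ProbabilityTheory Set Real Complex

lemma integral_mul_exp_mul (a x y : ℝ) :
    ∫ t in x..y, a * rexp (a * t) = rexp (a * y) - rexp (a * x) := by
  have hderiv : ∀ t ∈ uIcc x y, HasDerivAt (fun t ↦ rexp (a * t)) (a * rexp (a * t)) t :=
    fun t _ ↦ by simpa [mul_comm] using ((hasDerivAt_id t).const_mul a).exp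
  exact intervalIntegral.integral_eq_sub_of_hasDerivAt hderiv
    ((by fun_prop : Continuous _).intervalIntegrable _ _)

lemma integrable_exp_mul_abs_of_tail_le {Ω : Type*} [MeasurableSpace Ω] {μ : Measure Ω}
    [IsFiniteMeasure μ] {X : Ω → ℝ} (hX : AEMeasurable X μ) {a b c : ℝ} (ha : 0 ≤ a)
    (hab : a < b) (htail : ∀ t > 0, μ {ω | t < |X ω|} ≤ ENNReal.ofReal (c * rexp (-b * t))) :
    Integrable (fun ω ↦ rexp (a * |X ω|)) μ := by
  have hmeas : AEMeasurable (fun ω ↦ rexp (a * |X ω|)) μ := by fun_prop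
  have hlayer := lintegral_comp_eq_lintegral_meas_lt_mul μ (f := fun ω ↦ |X ω|)
    (g := fun t ↦ a * rexp (a * t)) (ae_of_all _ fun ω ↦ abs_nonneg _) hX.abs
    (fun _ _ ↦ (by fun_prop : Continuous _).intervalIntegrable _ _)
    (ae_of_all _ fun t ↦ by positivity)
  simp only [integral_mul_exp_mul, mul_zero, Real.exp_zero] at hlayer
  have hdominated : ∀ t > 0, μ {ω | t < |X ω|} * ENNReal.ofReal (a * rexp (a * t))
      ≤ ENNReal.ofReal (c * a * rexp (-(b - a) * t)) := fun t ht ↦ calc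
    _ ≤ ENNReal.ofReal (c * rexp (-b * t)) * ENNReal.ofReal (a * rexp (a * t)) := by
        gcongr; exact htail t ht
    _ = ENNReal.ofReal (c * a * rexp (-(b - a) * t)) := by
        rw [← ENNReal.ofReal_mul' (by positivity), mul_mul_mul_comm, ← Real.exp_add]
        ring_nf
  have hfinite : ∫⁻ ω, ENNReal.ofReal (rexp (a * |X ω|) - 1) ∂μ < ⊤ := calc
    _ ≤ ∫⁻ t in Ioi 0, ENNReal.ofReal (c * a * rexp (-(b - a) * t)) := by
        rw [hlayer]; exact setLIntegral_mono (by fun_prop) hdominated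
    _ < ⊤ := ((exp_neg_integrableOn_Ioi 0 (sub_pos.2 hab)).const_mul (c * a)).lintegral_lt_top
  have hsub : Integrable (fun ω ↦ rexp (a * |X ω|) - 1) μ :=
    ⟨(hmeas.sub aemeasurable_const).aestronglyMeasurable, (hasFiniteIntegral_iff_ofReal
      (ae_of_all _ fun ω ↦ sub_nonneg.2 (one_le_exp (by positivity)))).2 hfinite⟩
  exact (hsub.add (integrable_const 1)).congr (ae_of_all _ fun ω ↦ by simp)

lemma setOf_lt_abs_eq (t : ℝ) : {s : ℝ | t < |s|} = Iio (-t) ∪ Ioi t := by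
  ext s
  simp only [mem_ofPred_eq, mem_union, mem_Iio, mem_Ioi, lt_abs, lt_neg]
  tauto

lemma HasExpDecay.exists_integrable_exp_mul_abs {P : Measure ℝ} [IsFiniteMeasure P]
    (hP : HasExpDecay P) : ∃ a > 0, Integrable (fun s ↦ rexp (a * |s|)) P := by
  obtain ⟨c, -, b, hb, htail⟩ := hP
  refine ⟨b / 2, by positivity, integrable_exp_mul_abs_of_tail_le (c := c) aemeasurable_id
    (by positivity) (half_lt_self hb) fun t ht ↦ ?_⟩
  simpa only [id, setOf_lt_abs_eq] using (htail t ht).le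

lemma zero_mem_interior_integrableExpSet_of_integrable_exp_mul_abs {Ω : Type*}
    [MeasurableSpace Ω] {μ : Measure Ω} {X : Ω → ℝ} (hX : AEMeasurable X μ) {a : ℝ} (ha : 0 < a)
    (h : Integrable (fun ω ↦ rexp (a * |X ω|)) μ) : 0 ∈ interior (integrableExpSet X μ) := by
  refine mem_interior.2 ⟨Ioo (-a) a, fun u hu ↦ ?_, isOpen_Ioo, by simp [ha]⟩
  refine h.mono (by fun_prop) (ae_of_all _ fun ω ↦ ?_)
  simp only [norm_eq_abs, abs_exp, exp_le_exp]
  calc u * X ω ≤ |u| * |X ω| := by rw [← abs_mul]; exact le_abs_self _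
    _ ≤ a * |X ω| := by gcongr; exact abs_lt.2 hu |>.le

lemma analyticAt_charFun_of_zero_mem_interior {μ : Measure ℝ}
    (h : 0 ∈ interior (integrableExpSet id μ)) (t : ℝ) : AnalyticAt ℝ (charFun μ) t := by
  have hcomplexMGF : AnalyticAt ℂ (complexMGF id μ) (t * I) :=
    analyticAt_complexMGF (by simpa using h)
  have hline : AnalyticAt ℝ (fun s : ℝ ↦ (s : ℂ) * I) t :=
    (ofRealCLM.analyticAt t).mul analyticAt_const
  simpa only [Function.comp_def, complexMGF_id_mul_I] using
    hcomplexMGF.restrictScalars.comp_of_eq hline rfl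

/-- If a probability measure `P` on `ℝ` has exponential decay, then its
Fourier transform `t ↦ ∫ e^{its} dP(s)` is a real-analytic function on `ℝ`. -/
theorem statement5 (P : Measure ℝ) [IsProbabilityMeasure P] (hP : HasExpDecay P) :
    ∀ t₀ : ℝ, AnalyticAt ℝ (fun t : ℝ => ∫ s, Complex.exp (Complex.I * t * s) ∂P) t₀ := by
  obtain ⟨a, ha, hint⟩ := hP.exists_integrable_exp_mul_abs
  have hcharFun : (fun t : ℝ ↦ ∫ s, cexp (I * t * s) ∂P) = charFun P := by
    ext t
    rw [charFun_apply_real]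
    congr 1 with s
    ring_nf
  rw [hcharFun]
  exact analyticAt_charFun_of_zero_mem_interior
    (zero_mem_interior_integrableExpSet_of_integrable_exp_mul_abs aemeasurable_id ha hint)
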